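/- arXiv:1506.01606 — 4 statements merged into one kernel-verified Lean document; each statement's English description precedes it below -/
import Mathlib

section
/- Let P₁, P₂ be positive integers, a = 2π/P₁, b = 2π/P₂, and set k̃ = P₁ + P₂ + 1. For any integers t and k with k ≥ k̃, and for every l with 1 ≤ l ≤ k-1, the product ∏_{f=1}^{k-2} sin(c_{lf}(t - f - δ_{lf})) equals 0, where c_{lf}=a, δ_{lf}=0 if l+f ≤ k-1 and c_{lf}=b, δ_{lf}=1 if l+f > k-1. -/
open Real

/-! In the first `k - 1 - l` factors the argument is `a (t - f)`, in the remaining ones it is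
`b (t - 1 - f)`. If the first block has at least `P₁` factors it contains a full residue
system modulo `P₁`, hence some `f ≡ t (mod P₁)` and `sin (a (t - f)) = 0`. Otherwise
`l ≥ k - P₁ ≥ P₂ + 1`, so the second block has at least `P₂` factors, and the same argument
with `f ≡ t - 1 (mod P₂)` applies. -/

theorem Real.sin_two_pi_div_mul_intCast_eq_zero {P : ℕ} {x : ℤ} (h : (P : ℤ) ∣ x) :
    sin (2 * π / P * x) = 0 := by
  obtain ⟨m, rfl⟩ := h
  rcases eq_or_ne P 0 with rfl | hP
  · simp
  · exact sin_eq_zero_iff.mpr ⟨2 * m, by push_cast; field_simp⟩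

theorem Int.exists_dvd_sub_natCast_mem_Ico {P : ℕ} (hP : 0 < P) (x : ℤ) (n : ℕ) :
    ∃ f ∈ Set.Ico n (n + P), (P : ℤ) ∣ x - f := by
  have hr₀ : 0 ≤ (x - n) % P := Int.emod_nonneg _ (by omega)
  have hrP : (x - n) % P < P := Int.emod_lt_of_pos _ (by omega)
  refine ⟨n + ((x - n) % P).toNat, ⟨by omega, by omega⟩, ?_⟩
  have hx : x - ↑(n + ((x - n) % P).toNat) = x - n - (x - n) % P := by push_cast; omega
  exact hx ▸ Int.dvd_self_sub_emod

/-- With integer periods `P₁, P₂`, `a = 2π/P₁`, `b = 2π/P₂`, `k̃ = P₁+P₂+1`: for all integers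
`t` and all `k ≥ k̃`, `1 ≤ l ≤ k-1`, the product `∏_{f=1}^{k-2} sin(c_{lf}(t-f-δ_{lf}))`
vanishes, where `c_{lf} = a, δ_{lf} = 0` if `l+f ≤ k-1` and `c_{lf} = b, δ_{lf} = 1`
otherwise. -/
theorem prod_sin_eq_zero (P₁ P₂ : ℕ) (hP₁ : 0 < P₁) (hP₂ : 0 < P₂)
    (t : ℤ) (k l : ℕ) (hk : P₁ + P₂ + 1 ≤ k) (hl1 : 1 ≤ l) (hl2 : l ≤ k - 1) :
    ∏ f ∈ Finset.Icc 1 (k - 2),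
      Real.sin ((if l + f ≤ k - 1 then 2 * π / (P₁ : ℝ) else 2 * π / (P₂ : ℝ)) *
        ((t : ℝ) - (f : ℝ) - (if l + f ≤ k - 1 then 0 else 1))) = 0 := by
  by_cases hfirst : l + P₁ ≤ k - 1
  · obtain ⟨f, ⟨hf₁, hf₂⟩, hdvd⟩ := Int.exists_dvd_sub_natCast_mem_Ico hP₁ t 1
    have hlf : l + f ≤ k - 1 := by omega
    refine Finset.prod_eq_zero (i := f) (Finset.mem_Icc.mpr ⟨hf₁, by omega⟩) ?_
    rw [if_pos hlf, if_pos hlf, sub_zero]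
    exact_mod_cast sin_two_pi_div_mul_intCast_eq_zero hdvd
  · obtain ⟨f, ⟨hf₁, hf₂⟩, hdvd⟩ := Int.exists_dvd_sub_natCast_mem_Ico hP₂ (t - 1) (k - l)
    have hlf : ¬l + f ≤ k - 1 := by omega
    refine Finset.prod_eq_zero (i := f) (Finset.mem_Icc.mpr ⟨by omega, by omega⟩) ?_
    rw [if_neg hlf, if_neg hlf, sub_right_comm]
    exact_mod_cast sin_two_pi_div_mul_intCast_eq_zero hdvd
end

section
/- In a tdVARMA(1,1) model x_t = A_t x_{t-1} + e_t + B_t e_{t-1} started with zero initial values, the coefficients of the pure moving average representation x_t = e_t + ∑_{k=1}^{t-1} ψ_{tk} e_{t-k} are given by ψ_{tk} = (∏_{l=0}^{k-2} A_{t-l})·(B_{t-k+1} + A_{t-k+1}) for k = 1,...,t-1, where the empty product (l from 0 to -1) is the identity matrix. -/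
/-!
Substituting the representation of `x (t - 1)` into the model equation for `x t`, the coefficient
of `e (t - 1)` is `B t + A t` and every older coefficient is the one of `x (t - 1)` premultiplied by
`A t`: `ψ_{t,k+1} = A_t ψ_{t-1,k}`. The closed form satisfies exactly this recursion, so the
representation follows by induction on `t`.
-/

open Matrix Finset

theorem Int.sum_Icc_eq_add_sum_Icc_add_one {M : Type*} [AddCommMonoid M] (f : ℤ → M) {a b : ℤ}
    (h : a ≤ b) : ∑ k ∈ Icc a b, f k = f a + ∑ k ∈ Icc a (b - 1), f (k + 1) := by
  rw [← add_sum_Ioc_eq_sum_Icc h, ← Icc_add_one_left_eq_Ioc, ← sub_add_cancel b 1,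
    ← map_add_right_Icc, sum_map, add_sub_cancel_right]
  rfl

section
variable {n R : Type*} [Fintype n] [DecidableEq n] [Semiring R]

/-- The pure moving average coefficient `ψ_{tk}` of the tdVARMA(1,1) model. -/
def maCoeff (A B : ℤ → Matrix n n R) (t k : ℤ) : Matrix n n R :=
  ((List.range (k - 1).toNat).map (fun l => A (t - l))).prod * (B (t - k + 1) + A (t - k + 1))

theorem maCoeff_one (A B : ℤ → Matrix n n R) (t : ℤ) : maCoeff A B t 1 = B t + A t := by
  simp [maCoeff]

theorem maCoeff_add_one (A B : ℤ → Matrix n n R) (t : ℤ) {k : ℤ} (hk : 1 ≤ k) :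
    maCoeff A B (t + 1) (k + 1) = A (t + 1) * maCoeff A B t k := by
  obtain ⟨m, rfl⟩ : ∃ m : ℕ, k = m + 1 := ⟨(k - 1).toNat, by omega⟩
  have hB : t + 1 - (m + 1 + 1) + 1 = t - (m + 1) + 1 := by ring
  -- `List.range _` is coerced to `List ℤ` through a monadic bind; rewrite it back into a `map`.
  simp only [maCoeff, add_sub_cancel_right, hB, ← mul_assoc, ← List.prod_cons, List.pure_def,
    List.bind_eq_flatMap, ← List.map_eq_flatMap, List.map_map]
  rw [show ((m : ℤ) + 1).toNat = m + 1 by omega, Int.toNat_natCast, List.range_succ_eq_map,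
    List.map_cons, List.map_map]
  congr 3
  · simp
  · refine List.map_congr_left fun l _ => ?_
    simp only [Function.comp_apply, Nat.cast_succ]
    ring_nf

theorem tdVARMA_eq_sum_maCoeff (A B : ℤ → Matrix n n R) (x e : ℤ → n → R)
    (hx₀ : x 0 = 0) (he₀ : e 0 = 0)
    (hmodel : ∀ t : ℤ, 1 ≤ t → x t = A t *ᵥ x (t - 1) + e t + B t *ᵥ e (t - 1)) :
    ∀ t : ℤ, 1 ≤ t → x t = e t + ∑ k ∈ Icc 1 (t - 1), maCoeff A B t k *ᵥ e (t - k) := by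
  refine Int.leInduction ?_ fun t ht ih => ?_
  · simp [hmodel 1 le_rfl, hx₀, he₀]
  · have hsum : ∑ k ∈ Icc 1 t, maCoeff A B (t + 1) k *ᵥ e (t + 1 - k)
        = (B (t + 1) + A (t + 1)) *ᵥ e t
          + A (t + 1) *ᵥ ∑ k ∈ Icc 1 (t - 1), maCoeff A B t k *ᵥ e (t - k) := by
      rw [Int.sum_Icc_eq_add_sum_Icc_add_one _ ht, mulVec_sum, maCoeff_one, add_sub_cancel_right]
      congr 1
      refine sum_congr rfl fun k hk => ?_
      rw [maCoeff_add_one A B t (mem_Icc.mp hk).1, ← mulVec_mulVec, add_sub_add_right_eq_sub]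
    rw [add_sub_cancel_right, hsum, hmodel (t + 1) (by omega), add_sub_cancel_right, ih,
      mulVec_add, add_mulVec]
    abel

end

/-- Pure moving average representation of a tdVARMA(1,1) model started with zero
initial values: `ψ_{tk} = (∏_{l=0}^{k-2} A_{t-l})(B_{t-k+1} + A_{t-k+1})`. -/
theorem tdVARMA_pure_MA (r : ℕ) (A B : ℤ → Matrix (Fin r) (Fin r) ℝ)
    (x e : ℤ → Fin r → ℝ)
    (hinit : ∀ t : ℤ, t < 1 → x t = 0 ∧ e t = 0)
    (hmodel : ∀ t : ℤ, 1 ≤ t →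
      x t = A t *ᵥ x (t - 1) + e t + B t *ᵥ e (t - 1)) :
    ∀ t : ℤ, 1 ≤ t →
      x t = e t + ∑ k ∈ Finset.Icc (1 : ℤ) (t - 1),
        ((((List.range (k - 1).toNat).map (fun l => A (t - l))).prod) *
            (B (t - k + 1) + A (t - k + 1))) *ᵥ e (t - k) := by
  obtain ⟨hx₀, he₀⟩ := hinit 0 zero_lt_one
  exact tdVARMA_eq_sum_maCoeff A B x e hx₀ he₀ hmodel
end

section
/- In a tdVARMA(1,1) model with zero initial values, the coefficients of the pure autoregressive representation x_t = ∑_{k=1}^{t-1} π_{tk} x_{t-k} + e_t are π_{tk} = ((-1)^{k-1} ∏_{l=0}^{k-2} B_{t-l})·(A_{t-k+1} + B_{t-k+1}). -/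
open Matrix

/-!
Write `π t k` (`arCoeff`) for the claimed coefficients and `S t` (`arSum`) for
`∑_{k=1}^{t-1} π t k x_{t-k}`. Peeling one factor `B_{t+1}` off the product gives
`π (t+1) 1 = A_{t+1} + B_{t+1}` and `π (t+1) (k+1) = -B_{t+1} π t k`, hence
`S (t+1) = (A_{t+1} + B_{t+1}) x_t - B_{t+1} S t`. Substituting `e_t = x_t - S t` (the induction
hypothesis) into the model equation at time `t+1` then gives `x_{t+1} = S (t+1) + e_{t+1}`.
-/

namespace TdVARMA

open Finset

variable {n R : Type*} [Fintype n] [DecidableEq n] [CommRing R] (A B : ℤ → Matrix n n R)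

def arCoeff (t k : ℤ) : Matrix n n R :=
  ((-1 : R) ^ (k - 1).toNat • ((List.range (k - 1).toNat).map fun l : ℕ => B (t - l)).prod) *
    (A (t - k + 1) + B (t - k + 1))

theorem arCoeff_one (t : ℤ) : arCoeff A B t 1 = A t + B t := by
  simp [arCoeff]

theorem arCoeff_add_one_add_one (t : ℤ) {k : ℤ} (hk : 1 ≤ k) :
    arCoeff A B (t + 1) (k + 1) = -(B (t + 1) * arCoeff A B t k) := by
  obtain ⟨m, rfl⟩ : ∃ m : ℕ, k = m + 1 := ⟨(k - 1).toNat, by omega⟩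
  have hprod : ((List.range (m + 1)).map fun l : ℕ => B (t + 1 - l)).prod =
      B (t + 1) * ((List.range m).map fun l : ℕ => B (t - l)).prod := by
    simp only [List.range_succ_eq_map, List.map_cons, List.map_map, List.prod_cons,
      Function.comp_def, Nat.cast_zero, sub_zero, Nat.cast_succ, sub_add_eq_sub_sub_swap,
      add_sub_cancel_right]
  have hm : (m + 1 + 1 - 1 : ℤ).toNat = m + 1 := by omega
  rw [arCoeff, arCoeff, hm, add_sub_cancel_right, Int.toNat_natCast, hprod, pow_succ,
    add_sub_add_right_eq_sub]
  simp only [mul_neg_one, neg_smul, neg_mul, smul_mul_assoc, mul_smul_comm, mul_assoc]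

variable (x : ℤ → n → R)

noncomputable def arSum (t : ℤ) : n → R :=
  ∑ k ∈ Icc 1 (t - 1), arCoeff A B t k *ᵥ x (t - k)

theorem arSum_add_one {t : ℤ} (ht : 1 ≤ t) :
    arSum A B x (t + 1) = (A (t + 1) + B (t + 1)) *ᵥ x t - B (t + 1) *ᵥ arSum A B x t := by
  have hIcc : Icc 1 t = (Ioc 1 t).cons 1 left_notMem_Ioc := Icc_eq_cons_Ioc ht
  have hIoc : Ioc 1 t = (Icc 1 (t - 1)).map (addRightEmbedding 1) := by
    rw [map_add_right_Icc, sub_add_cancel, Icc_add_one_left_eq_Ioc]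
  rw [arSum, arSum, add_sub_cancel_right, hIcc, sum_cons, hIoc, sum_map, mulVec_sum,
    arCoeff_one, add_sub_cancel_right, sub_eq_add_neg (_ *ᵥ _), ← sum_neg_distrib]
  congr 1
  refine sum_congr rfl fun k hk => ?_
  rw [addRightEmbedding_apply, arCoeff_add_one_add_one A B t (mem_Icc.1 hk).1,
    add_sub_add_right_eq_sub, neg_mulVec, mulVec_mulVec]

end TdVARMA

/-- Pure autoregressive representation of a tdVARMA(1,1) model started with zero initial
values: `π_{tk} = ((-1)^{k-1} ∏_{l=0}^{k-2} B_{t-l})(A_{t-k+1} + B_{t-k+1})`. -/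
theorem tdVARMA_pure_AR (r : ℕ) (A B : ℤ → Matrix (Fin r) (Fin r) ℝ)
    (x e : ℤ → Fin r → ℝ)
    (hinit : ∀ t : ℤ, t < 1 → x t = 0 ∧ e t = 0)
    (hmodel : ∀ t : ℤ, 1 ≤ t →
      x t = A t *ᵥ x (t - 1) + e t + B t *ᵥ e (t - 1)) :
    ∀ t : ℤ, 1 ≤ t →
      x t = (∑ k ∈ Finset.Icc (1 : ℤ) (t - 1),
        (((-1 : ℝ) ^ (k - 1).toNat •
            ((List.range (k - 1).toNat).map (fun l => B (t - l))).prod) *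
            (A (t - k + 1) + B (t - k + 1))) *ᵥ x (t - k)) + e t := by
  suffices h : ∀ t : ℤ, 1 ≤ t → x t = TdVARMA.arSum A B x t + e t by
    -- In the statement `fun l => B (t - l)` takes `l : ℤ`, so `List.range` is lifted to `List ℤ`
    -- through the list monad.
    simpa only [TdVARMA.arSum, TdVARMA.arCoeff, List.pure_def, List.bind_eq_flatMap,
      ← List.map_eq_flatMap, List.map_map, Function.comp_def] using h
  intro t ht
  induction t, ht using Int.leInduction with
  | base =>
    obtain ⟨hx0, he0⟩ := hinit 0 zero_lt_one
    simp [hmodel 1 le_rfl, hx0, he0, TdVARMA.arSum]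
  | succ t ht ih =>
    have he : e t = x t - TdVARMA.arSum A B x t := eq_sub_of_add_eq' ih.symm
    rw [hmodel (t + 1) (by omega), add_sub_cancel_right, he, TdVARMA.arSum_add_one A B x ht,
      mulVec_sub, add_mulVec]
    abel
end

section
/- Let Σ_t = g_t Σ g_tᵀ where g_t = [[exp(-η₁₁ sin(ct)), 1],[-1, exp(-η₂₂ sin(ct))]] and Σ = [[s₁₁, s₁₂],[s₁₂, s₂₂]] with s₁₁s₂₂ - s₁₂² > 0. Then tr[Σ_t^{-1} (∂Σ_t/∂η₁₁) Σ_t^{-1} (∂Σ_t/∂η₁₁)] = 2 sin²(ct) · ((e^{η₂₂ sin(ct)} s₁₁ - s₁₂)² + 2(s₁₁s₂₂ - s₁₂²)) / ((1 + e^{(η₁₁+η₂₂) sin(ct)})² (s₁₁s₂₂ - s₁₂²)), and this quantity is nonnegative and bounded uniformly in t. -/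
/-! With `Σ_t = g S gᵀ`, the derivative is `g' S gᵀ + g S g'ᵀ = g (F S + S Fᵀ) gᵀ` where
`F = g⁻¹ g'`, and the congruence by `g` cancels in `tr(Σ_t⁻¹ ∂Σ_t Σ_t⁻¹ ∂Σ_t)`, leaving
`2 tr(F²) + 2 tr(S⁻¹ F S Fᵀ)`. Only the top-left entry of `g_t` depends on `η₁₁`, so
`F = k [[1, 0], [w, 0]]` with `k = -sin(ct) / (1 + e^{(η₁₁+η₂₂) sin(ct)})` and
`w = e^{η₂₂ sin(ct)}`, and the trace becomes a 2 × 2 computation. The uniform bound follows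
from `k² ≤ 1` and `w ≤ e^{|η₂₂|}`. -/

open Matrix Real

section Derivative

variable {𝕜 l m n : Type*} [NontriviallyNormedField 𝕜] [Fintype m] {x : 𝕜}

theorem hasDerivAt_matrix_mul_apply {A : 𝕜 → Matrix l m 𝕜} {B : 𝕜 → Matrix m n 𝕜}
    {A' : Matrix l m 𝕜} {B' : Matrix m n 𝕜}
    (hA : ∀ i j, HasDerivAt (fun y => A y i j) (A' i j) x)
    (hB : ∀ i j, HasDerivAt (fun y => B y i j) (B' i j) x) (i : l) (j : n) :
    HasDerivAt (fun y => (A y * B y) i j) ((A' * B x + A x * B') i j) x := by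
  simp only [mul_apply, Matrix.add_apply, ← Finset.sum_add_distrib]
  exact HasDerivAt.fun_sum fun k _ => (hA i k).mul (hB k j)

theorem hasDerivAt_mul_mul_transpose_apply {g : 𝕜 → Matrix l m 𝕜} {g' : Matrix l m 𝕜}
    (S : Matrix m m 𝕜) (hg : ∀ i j, HasDerivAt (fun y => g y i j) (g' i j) x) (i j : l) :
    HasDerivAt (fun y => (g y * S * (g y)ᵀ) i j)
      ((g' * S * (g x)ᵀ + g x * S * g'ᵀ) i j) x := by
  have hgS : ∀ i j, HasDerivAt (fun y => (g y * S) i j) ((g' * S) i j) x := by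
    simpa using hasDerivAt_matrix_mul_apply (B' := 0) hg fun i j => hasDerivAt_const x (S i j)
  exact hasDerivAt_matrix_mul_apply hgS (fun i j => hg j i) i j

end Derivative

section Trace

variable {n R : Type*} [Fintype n] [DecidableEq n] [CommRing R]

theorem trace_inv_mul_congr_sq {g : Matrix n n R} (hg : IsUnit g.det) (S G : Matrix n n R) :
    trace ((g * S * gᵀ)⁻¹ * (g * G * gᵀ) * (g * S * gᵀ)⁻¹ * (g * G * gᵀ)) =
      trace (S⁻¹ * G * S⁻¹ * G) := by
  have hgT : IsUnit gᵀ.det := isUnit_det_transpose _ hg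
  rw [Matrix.mul_inv_rev, Matrix.mul_inv_rev,
    ← trace_conj' ((isUnit_iff_isUnit_det _).2 hgT) (S⁻¹ * G * S⁻¹ * G)]
  simp only [Matrix.mul_assoc, nonsing_inv_mul_cancel_left g _ hg,
    mul_nonsing_inv_cancel_left gᵀ _ hgT]

theorem mul_add_mul_transpose_eq_congr {g : Matrix n n R} (hg : IsUnit g.det)
    (g' S : Matrix n n R) :
    g' * S * gᵀ + g * S * g'ᵀ = g * ((g⁻¹ * g') * S + S * (g⁻¹ * g')ᵀ) * gᵀ := by
  rw [transpose_mul, Matrix.mul_add, Matrix.add_mul]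
  simp only [← Matrix.mul_assoc, mul_nonsing_inv g hg, Matrix.one_mul]
  rw [Matrix.mul_assoc _ g⁻¹ᵀ, ← transpose_mul, mul_nonsing_inv g hg, transpose_one,
    Matrix.mul_one]

theorem trace_sq_inv_mul_add_mul_transpose {S : Matrix n n R} (hS : IsUnit S.det)
    (F : Matrix n n R) :
    trace (S⁻¹ * (F * S + S * Fᵀ) * S⁻¹ * (F * S + S * Fᵀ)) =
      2 * trace (F * F) + 2 * trace (S⁻¹ * F * S * Fᵀ) := by
  have hK : S⁻¹ * (F * S + S * Fᵀ) = S⁻¹ * F * S + Fᵀ := by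
    rw [Matrix.mul_add, nonsing_inv_mul_cancel_left S _ hS, Matrix.mul_assoc]
  have hKK : trace (S⁻¹ * F * S * (S⁻¹ * F * S)) = trace (F * F) := by
    rw [← trace_conj' ((isUnit_iff_isUnit_det _).2 hS) (F * F)]
    simp only [Matrix.mul_assoc, mul_nonsing_inv_cancel_left S _ hS]
  have hFF : trace (Fᵀ * Fᵀ) = trace (F * F) := by rw [← transpose_mul, trace_transpose]
  rw [Matrix.mul_assoc (S⁻¹ * _), hK, Matrix.add_mul, Matrix.mul_add, Matrix.mul_add, trace_add,
    trace_add, trace_add, hKK, hFF, trace_mul_comm Fᵀ]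
  ring

theorem trace_inv_mul_deriv_congr_sq {g S : Matrix n n R} (hg : IsUnit g.det)
    (hS : IsUnit S.det) (g' : Matrix n n R) :
    trace ((g * S * gᵀ)⁻¹ * (g' * S * gᵀ + g * S * g'ᵀ) * (g * S * gᵀ)⁻¹ *
        (g' * S * gᵀ + g * S * g'ᵀ)) =
      2 * trace (g⁻¹ * g' * (g⁻¹ * g')) +
        2 * trace (S⁻¹ * (g⁻¹ * g') * S * (g⁻¹ * g')ᵀ) := by
  rw [mul_add_mul_transpose_eq_congr hg, trace_inv_mul_congr_sq hg,
    trace_sq_inv_mul_add_mul_transpose hS]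

end Trace

theorem hasDerivAt_exp_neg_mul_fin_two_apply (s p q r x : ℝ) (i j : Fin 2) :
    HasDerivAt (fun η => !![exp (-η * s), p; q, r] i j)
      (!![-s * exp (-x * s), 0; 0, 0] i j) x := by
  fin_cases i <;> fin_cases j
  · show HasDerivAt (fun η => exp (-η * s)) (-s * exp (-x * s)) x
    convert ((hasDerivAt_neg x).mul_const s).exp using 1
    ring
  all_goals exact hasDerivAt_const _ _

theorem inv_mul_single_zero_zero_fin_two {u w : ℝ} (hu : u ≠ 0) (hw : w ≠ 0)
    (huw : 1 + u * w ≠ 0) (s : ℝ) :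
    !![u⁻¹, 1; -1, w⁻¹]⁻¹ * !![-s * u⁻¹, 0; 0, 0] =
      !![-s / (1 + u * w), 0; -s / (1 + u * w) * w, 0] := by
  rw [inv_def, adjugate_fin_two_of, det_fin_two_of, Ring.inverse_eq_inv', smul_mul, mul_fin_two]
  ext i j
  fin_cases i <;> fin_cases j <;> simp <;> field_simp

theorem trace_fisher_fin_two (k w s11 s12 s22 : ℝ) (hdet : s11 * s22 - s12 ^ 2 ≠ 0) :
    2 * trace (!![k, 0; k * w, 0] * !![k, 0; k * w, 0]) +
        2 * trace (!![s11, s12; s12, s22]⁻¹ * !![k, 0; k * w, 0] * !![s11, s12; s12, s22] *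
          !![k, 0; k * w, 0]ᵀ) =
      2 * k ^ 2 * ((w * s11 - s12) ^ 2 + 2 * (s11 * s22 - s12 ^ 2)) / (s11 * s22 - s12 ^ 2) := by
  rw [inv_def, adjugate_fin_two_of, det_fin_two_of, Ring.inverse_eq_inv']
  simp only [trace_fin_two, mul_apply, Fin.sum_univ_two, transpose_apply, Matrix.smul_apply,
    of_apply, cons_val_zero, cons_val_one, smul_eq_mul]
  field_simp
  ring

theorem abs_exp_mul_sin_mul_sub_le (a x p q : ℝ) :
    |exp (a * sin x) * p - q| ≤ exp |a| * |p| + |q| := by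
  have hexp : exp (a * sin x) ≤ exp |a| := by
    refine exp_le_exp.2 ((le_abs_self _).trans ?_)
    rw [abs_mul]
    exact mul_le_of_le_one_right (abs_nonneg a) (abs_sin_le_one x)
  calc |exp (a * sin x) * p - q| ≤ |exp (a * sin x)| * |p| + |q| := by
        rw [← abs_mul]; exact abs_sub _ _
    _ ≤ exp |a| * |p| + |q| := by rw [abs_of_pos (exp_pos _)]; gcongr

theorem sq_sin_div_one_add_le_one {E : ℝ} (hE : 0 ≤ E) (x : ℝ) :
    (sin x / (1 + E)) ^ 2 ≤ 1 := by
  rw [div_pow, div_le_one (by positivity)]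
  nlinarith [sin_sq_le_one x]

theorem sq_sin_div_mul_fisher_mem_Icc {E d : ℝ} (hE : 0 ≤ E) (hd : 0 < d) (a x p q : ℝ) :
    (sin x / (1 + E)) ^ 2 * (2 * ((exp (a * sin x) * p - q) ^ 2 + 2 * d) / d) ∈
      Set.Icc 0 (2 * ((exp |a| * |p| + |q|) ^ 2 + 2 * d) / d) := by
  have hsq : (exp (a * sin x) * p - q) ^ 2 ≤ (exp |a| * |p| + |q|) ^ 2 :=
    sq_le_sq.2 ((abs_exp_mul_sin_mul_sub_le a x p q).trans (le_abs_self _))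
  have hnonneg : 0 ≤ 2 * ((exp (a * sin x) * p - q) ^ 2 + 2 * d) / d := by positivity
  refine ⟨mul_nonneg (sq_nonneg _) hnonneg, ?_⟩
  refine (mul_le_of_le_one_left hnonneg (sq_sin_div_one_add_le_one hE x)).trans ?_
  gcongr

/-- For `Σ_t = g_t Σ g_tᵀ` with `g_t = [[e^{-η₁₁ sin(ct)}, 1],[-1, e^{-η₂₂ sin(ct)}]]` and
positive definite `Σ = [[s₁₁,s₁₂],[s₁₂,s₂₂]]`, the quantity
`tr[Σ_t⁻¹ (∂Σ_t/∂η₁₁) Σ_t⁻¹ (∂Σ_t/∂η₁₁)]` equals the stated closed form, and it is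
nonnegative and bounded uniformly in `t`. -/
theorem heteroscedastic_trace_formula (η11 η22 c s11 s12 s22 : ℝ)
    (hdet : 0 < s11 * s22 - s12 ^ 2) :
    ∃ C : ℝ, ∀ t : ℝ,
      let g : ℝ → Matrix (Fin 2) (Fin 2) ℝ := fun η =>
        !![Real.exp (-η * Real.sin (c * t)), 1; -1, Real.exp (-η22 * Real.sin (c * t))]
      let S : Matrix (Fin 2) (Fin 2) ℝ := !![s11, s12; s12, s22]
      let St : ℝ → Matrix (Fin 2) (Fin 2) ℝ := fun η => g η * S * (g η)ᵀ
      let D : Matrix (Fin 2) (Fin 2) ℝ :=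
        Matrix.of fun i j => deriv (fun η => St η i j) η11
      let V : ℝ := ((St η11)⁻¹ * D * (St η11)⁻¹ * D).trace
      V = 2 * Real.sin (c * t) ^ 2 *
            ((Real.exp (η22 * Real.sin (c * t)) * s11 - s12) ^ 2 +
              2 * (s11 * s22 - s12 ^ 2)) /
          ((1 + Real.exp ((η11 + η22) * Real.sin (c * t))) ^ 2 *
            (s11 * s22 - s12 ^ 2)) ∧
      0 ≤ V ∧ V ≤ C := by
  refine ⟨2 * ((exp |η22| * |s11| + |s12|) ^ 2 + 2 * (s11 * s22 - s12 ^ 2)) /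
      (s11 * s22 - s12 ^ 2), fun t => ?_⟩
  intro g S St D V
  set s := sin (c * t)
  set u := exp (η11 * s)
  set w := exp (η22 * s)
  have hexp_neg : ∀ η, exp (-η * s) = (exp (η * s))⁻¹ := fun η => by rw [neg_mul, exp_neg]
  have hg : g η11 = !![u⁻¹, 1; -1, w⁻¹] := by
    show !![exp (-η11 * s), 1; -1, exp (-η22 * s)] = _
    rw [hexp_neg, hexp_neg]
  have hD : D = !![-s * u⁻¹, 0; 0, 0] * S * (g η11)ᵀ +
      g η11 * S * !![-s * u⁻¹, 0; 0, 0]ᵀ := by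
    ext i j
    rw [← hexp_neg]
    exact (hasDerivAt_mul_mul_transpose_apply S
      (hasDerivAt_exp_neg_mul_fin_two_apply s 1 (-1) _ η11) i j).deriv
  have hg_det : IsUnit (g η11).det := by
    rw [hg, det_fin_two_of, isUnit_iff_ne_zero, one_mul, sub_neg_eq_add]
    positivity
  have hS_det : IsUnit S.det := by
    rw [det_fin_two_of, isUnit_iff_ne_zero]
    nlinarith
  have hV : V = (s / (1 + u * w)) ^ 2 *
      (2 * ((w * s11 - s12) ^ 2 + 2 * (s11 * s22 - s12 ^ 2)) / (s11 * s22 - s12 ^ 2)) := by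
    simp only [V, St, hD]
    rw [trace_inv_mul_deriv_congr_sq hg_det hS_det, hg,
      inv_mul_single_zero_zero_fin_two (exp_pos _).ne' (exp_pos _).ne' (by positivity),
      trace_fisher_fin_two _ _ _ _ _ hdet.ne']
    ring
  obtain ⟨hV_nonneg, hV_le⟩ :=
    hV ▸ sq_sin_div_mul_fisher_mem_Icc (by positivity) hdet η22 (c * t) s11 s12
  refine ⟨?_, hV_nonneg, hV_le⟩
  rw [hV, show exp ((η11 + η22) * s) = u * w by rw [add_mul, exp_add]]
  field_simp
end
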